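/- arXiv:2512.12820 — 3 statements merged into one kernel-verified Lean document; each statement's English description precedes it below -/
import Mathlib

section
/- Let (f, Q, ξ₁,…,ξ_s, η¹,…,η^s) be a pointwise weak metric f-structure on V and let h be a skew-adjoint endomorphism of V with h∘f = −f∘h and hξᵢ = 0 for all i. Suppose x ∈ V, x ≠ 0, and h²x = −λ²x for some real λ ≠ 0. Then the four vectors x, fx, hx, h(fx) are nonzero, pairwise orthogonal, and each is an eigenvector of h² with eigenvalue −λ²; in particular, the eigenspace of h² for the eigenvalue −λ² has dimension at least 4. -/
open scoped RealInnerProductSpace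

/-- A pointwise weak metric f-structure on a real inner product space `V`:
`f` is skew-adjoint, `Q` is self-adjoint and bijective, the `ξᵢ` are orthonormal,
the `ηⁱ` are dual functionals, and the compatibility identities hold. -/
structure PWeakMetricF (s : ℕ) (V : Type*) [NormedAddCommGroup V]
    [InnerProductSpace ℝ V] where
  f : V →ₗ[ℝ] V
  Q : V →ₗ[ℝ] V
  xi : Fin s → V
  eta : Fin s → V →ₗ[ℝ] ℝ
  f_skew : ∀ x y : V, ⟪f x, y⟫ = -⟪x, f y⟫
  Q_selfAdjoint : ∀ x y : V, ⟪Q x, y⟫ = ⟪x, Q y⟫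
  Q_bijective : Function.Bijective ⇑Q
  xi_orthonormal : Orthonormal ℝ xi
  eta_xi : ∀ i j, eta i (xi j) = if i = j then (1 : ℝ) else 0
  f_sq : ∀ x : V, f (f x) = -Q x + ∑ i, eta i x • xi i
  Q_xi : ∀ i, Q (xi i) = xi i
  metric : ∀ x y : V, ⟪f x, f y⟫ = ⟪x, Q y⟫ - ∑ i, eta i x * eta i y

/-- if `h` is skew-adjoint, anticommutes with `f`, kills the `ξᵢ`, and
`h²x = −λ²x` with `x ≠ 0`, `λ ≠ 0`, then `x, fx, hx, h(fx)` are nonzero, pairwise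
orthogonal eigenvectors of `h²` with eigenvalue `−λ²`; in particular the eigenspace of
`h²` for `−λ²` has dimension at least 4. -/
theorem weakMetricF_eigenspace_dim_ge_four
    {V : Type*} [NormedAddCommGroup V] [InnerProductSpace ℝ V] [FiniteDimensional ℝ V]
    {s : ℕ} (hs : 1 ≤ s) (S : PWeakMetricF s V)
    (h : V →ₗ[ℝ] V)
    (hskew : ∀ x y : V, ⟪h x, y⟫ = -⟪x, h y⟫)
    (hanti : h ∘ₗ S.f = -(S.f ∘ₗ h))
    (hxi : ∀ i, h (S.xi i) = 0)
    (x : V) (hx : x ≠ 0) (l : ℝ) (hl : l ≠ 0)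
    (heig : h (h x) = -(l ^ 2) • x) :
    (S.f x ≠ 0 ∧ h x ≠ 0 ∧ h (S.f x) ≠ 0) ∧
    (⟪x, S.f x⟫ = 0 ∧ ⟪x, h x⟫ = 0 ∧ ⟪x, h (S.f x)⟫ = 0 ∧
     ⟪S.f x, h x⟫ = 0 ∧ ⟪S.f x, h (S.f x)⟫ = 0 ∧ ⟪h x, h (S.f x)⟫ = 0) ∧
    (h (h (S.f x)) = -(l ^ 2) • S.f x ∧
     h (h (h x)) = -(l ^ 2) • h x ∧
     h (h (h (S.f x))) = -(l ^ 2) • h (S.f x)) ∧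
    4 ≤ Module.finrank ℝ (Module.End.eigenspace (h ∘ₗ h : Module.End ℝ V) (-(l ^ 2))) := by
  have hl2 : -(l ^ 2) ≠ 0 := by simpa using pow_ne_zero 2 hl
  have hanti' : ∀ y : V, h (S.f y) = -S.f (h y) := by
    intro y
    have := LinearMap.congr_fun hanti y
    simpa using this
  have key : ∀ y : V, S.f y = 0 → h y = 0 := by
    intro y hy
    have h0 := S.f_sq y
    rw [hy, map_zero] at h0
    have h1 : S.Q y = ∑ i, S.eta i y • S.xi i := neg_add_eq_zero.mp h0.symm
    have h2 : S.Q (∑ i, S.eta i y • S.xi i) = ∑ i, S.eta i y • S.xi i := by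
      rw [map_sum]
      refine Finset.sum_congr rfl fun i _ => ?_
      rw [map_smul, S.Q_xi]
    have h3 : y = ∑ i, S.eta i y • S.xi i := S.Q_bijective.1 (by rw [h1, h2])
    rw [h3, map_sum]
    refine Finset.sum_eq_zero fun i _ => ?_
    rw [map_smul, hxi, smul_zero]
  have hhx : h x ≠ 0 := by
    intro h0
    apply hx
    have : (-(l ^ 2)) • x = 0 := by rw [← heig, h0, map_zero]
    exact (smul_eq_zero.mp this).resolve_left hl2
  have hfx : S.f x ≠ 0 := fun h0 => hhx (key x h0)
  have hhfx : h (S.f x) ≠ 0 := by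
    intro h0
    rw [hanti' x, neg_eq_zero] at h0
    have := key (h x) h0
    rw [heig] at this
    exact hx ((smul_eq_zero.mp this).resolve_left hl2)
  have e2 : h (h (h x)) = -(l ^ 2) • h x := by rw [heig, map_smul]
  have e1 : h (h (S.f x)) = -(l ^ 2) • S.f x := by
    rw [hanti' x, map_neg, hanti' (h x), neg_neg, heig, map_smul]
  have e3 : h (h (h (S.f x))) = -(l ^ 2) • h (S.f x) := by rw [e1, map_smul]
  have o1 : ⟪x, S.f x⟫ = 0 := by
    have h1 := S.f_skew x x
    have h2 := real_inner_comm (S.f x) x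
    linarith
  have o2 : ⟪x, h x⟫ = 0 := by
    have h1 := hskew x x
    have h2 := real_inner_comm (h x) x
    linarith
  have o5 : ⟪S.f x, h (S.f x)⟫ = 0 := by
    have h1 := hskew (S.f x) (S.f x)
    have h2 := real_inner_comm (h (S.f x)) (S.f x)
    linarith
  have ob : ⟪h (S.f x), x⟫ = ⟪S.f x, h x⟫ := by
    rw [hanti' x, inner_neg_left, S.f_skew (h x) x, neg_neg, real_inner_comm]
  have o4 : ⟪S.f x, h x⟫ = 0 := by
    have ha := hskew (S.f x) x
    rw [ob] at ha
    linarith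
  have o3 : ⟪x, h (S.f x)⟫ = 0 := by rw [real_inner_comm, ob, o4]
  have o6 : ⟪h x, h (S.f x)⟫ = 0 := by
    have t := hskew (h x) (S.f x)
    rw [heig, real_inner_smul_left, o1, mul_zero] at t
    linarith
  refine ⟨⟨hfx, hhx, hhfx⟩, ⟨o1, o2, o3, o4, o5, o6⟩, ⟨e1, e2, e3⟩, ?_⟩
  have o1' : ⟪S.f x, x⟫ = 0 := by rw [real_inner_comm]; exact o1
  have o2' : ⟪h x, x⟫ = 0 := by rw [real_inner_comm]; exact o2
  have o3' : ⟪h (S.f x), x⟫ = 0 := by rw [real_inner_comm]; exact o3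
  have o4' : ⟪h x, S.f x⟫ = 0 := by rw [real_inner_comm]; exact o4
  have o5' : ⟪h (S.f x), S.f x⟫ = 0 := by rw [real_inner_comm]; exact o5
  have o6' : ⟪h (S.f x), h x⟫ = 0 := by rw [real_inner_comm]; exact o6
  set W := Module.End.eigenspace (h ∘ₗ h : Module.End ℝ V) (-(l ^ 2)) with hW
  have mem : ∀ y : V, h (h y) = -(l ^ 2) • y → y ∈ W := by
    intro y hy
    rw [hW, Module.End.mem_eigenspace_iff]
    simpa using hy
  have hne : ∀ i, (![x, S.f x, h x, h (S.f x)]) i ≠ 0 := by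
    intro i
    fin_cases i
    · simpa using hx
    · simpa using hfx
    · simpa using hhx
    · simpa using hhfx
  have hortho : Pairwise fun i j => ⟪(![x, S.f x, h x, h (S.f x)]) i,
      (![x, S.f x, h x, h (S.f x)]) j⟫ = 0 := by
    intro i j hij
    fin_cases i <;> fin_cases j <;>
      first
        | exact absurd rfl hij
        | simpa using o1 | simpa using o2 | simpa using o3
        | simpa using o4 | simpa using o5 | simpa using o6
        | simpa using o1' | simpa using o2' | simpa using o3'
        | simpa using o4' | simpa using o5' | simpa using o6'
  have hli : LinearIndependent ℝ (![x, S.f x, h x, h (S.f x)]) :=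
    linearIndependent_of_ne_zero_of_inner_eq_zero hne hortho
  have hspan : Submodule.span ℝ (Set.range (![x, S.f x, h x, h (S.f x)])) ≤ W := by
    rw [Submodule.span_le]
    rintro _ ⟨i, rfl⟩
    fin_cases i
    · exact mem x heig
    · exact mem _ e1
    · exact mem _ e2
    · exact mem _ e3
  calc (4 : ℕ)
      = Module.finrank ℝ (Submodule.span ℝ (Set.range (![x, S.f x, h x, h (S.f x)]))) := by
        rw [finrank_span_eq_card hli, Fintype.card_fin]
    _ ≤ Module.finrank ℝ W := Submodule.finrank_mono hspan
end

section
/- Suppose dim D = 2n with n ≥ 3 (so dim V = 2n + s). Let ω be an alternating 2-form on V such that ω(ξₐ, v) = 0 for all a = 1,…,s and all v ∈ V, and such that the restriction of ω to D is nondegenerate (for every nonzero u ∈ D there exists v ∈ D with ω(u, v) ≠ 0). Then the linear map β ↦ ω∧β, from alternating 2-forms on V to alternating 4-forms on V, is injective: ω∧β = 0 implies β = 0. -/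
set_option linter.unusedSectionVars false
set_option maxHeartbeats 1000000

namespace WedgeAux

variable {V : Type*} [AddCommGroup V] [Module ℝ V]

lemma upd0 (x y z : V) : Function.update ![x, z] 0 y = ![y, z] := by
  funext i; fin_cases i <;> simp
lemma upd1 (x y z : V) : Function.update ![x, z] 1 y = ![x, y] := by
  funext i; fin_cases i <;> simp

lemma add_left (f : AlternatingMap ℝ V ℝ (Fin 2)) (x y z : V) :
    f ![x + y, z] = f ![x, z] + f ![y, z] := by
  have h := f.toMultilinearMap.map_update_add ![x, z] 0 x y
  simpa [upd0] using h

lemma smul_left (f : AlternatingMap ℝ V ℝ (Fin 2)) (c : ℝ) (x z : V) :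
    f ![c • x, z] = c * f ![x, z] := by
  have h := f.toMultilinearMap.map_update_smul ![x, z] 0 c x
  simpa [upd0] using h

lemma add_right (f : AlternatingMap ℝ V ℝ (Fin 2)) (x y z : V) :
    f ![x, y + z] = f ![x, y] + f ![x, z] := by
  have h := f.toMultilinearMap.map_update_add ![x, y] 1 y z
  simpa [upd1] using h

lemma smul_right (f : AlternatingMap ℝ V ℝ (Fin 2)) (c : ℝ) (x z : V) :
    f ![x, c • z] = c * f ![x, z] := by
  have h := f.toMultilinearMap.map_update_smul ![x, z] 1 c z
  simpa [upd1] using h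

/-- `z ↦ f ![x, z]` as a linear map. -/
noncomputable def lmr (f : AlternatingMap ℝ V ℝ (Fin 2)) (x : V) : V →ₗ[ℝ] ℝ where
  toFun z := f ![x, z]
  map_add' := add_right f x
  map_smul' c z := smul_right f c x z

/-- `x ↦ f ![x, z]` as a linear map. -/
noncomputable def lml (f : AlternatingMap ℝ V ℝ (Fin 2)) (z : V) : V →ₗ[ℝ] ℝ where
  toFun x := f ![x, z]
  map_add' x y := add_left f x y z
  map_smul' c x := smul_left f c x z

lemma sum_right {ι : Type*} (f : AlternatingMap ℝ V ℝ (Fin 2)) (x : V)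
    (t : Finset ι) (a : ι → ℝ) (y : ι → V) :
    f ![x, ∑ i ∈ t, a i • y i] = ∑ i ∈ t, a i * f ![x, y i] := by
  have h := map_sum (lmr f x) (fun i => a i • y i) t
  simp only [map_smul, smul_eq_mul] at h
  exact h

lemma sum_left {ι : Type*} (f : AlternatingMap ℝ V ℝ (Fin 2)) (z : V)
    (t : Finset ι) (a : ι → ℝ) (y : ι → V) :
    f ![∑ i ∈ t, a i • y i, z] = ∑ i ∈ t, a i * f ![y i, z] := by
  have h := map_sum (lml f z) (fun i => a i • y i) t
  simp only [map_smul, smul_eq_mul] at h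
  exact h

lemma swap (f : AlternatingMap ℝ V ℝ (Fin 2)) (x y : V) :
    f ![y, x] = - f ![x, y] := by
  have h0 : f ![x + y, x + y] = 0 :=
    f.map_eq_zero_of_eq _ (show (![x+y, x+y] : Fin 2 → V) 0 = ![x+y,x+y] 1 from rfl)
      (by decide)
  have hx : f ![x, x] = 0 :=
    f.map_eq_zero_of_eq _ (show (![x, x] : Fin 2 → V) 0 = ![x,x] 1 from rfl) (by decide)
  have hy : f ![y, y] = 0 :=
    f.map_eq_zero_of_eq _ (show (![y, y] : Fin 2 → V) 0 = ![y,y] 1 from rfl) (by decide)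
  have h1 : f ![x + y, x + y] = f ![x, x] + f ![x, y] + (f ![y, x] + f ![y, y]) := by
    rw [add_left, add_right, add_right]
  rw [h0, hx, hy] at h1
  linarith

end WedgeAux

/-- with `V = R ⊕ D`, `dim D = 2n`, `n ≥ 3`, `dim V = 2n + s`, let `ω`
be an alternating 2-form with `ω(ξₐ, ·) = 0` whose restriction to `D` is nondegenerate.
Then wedging with `ω` is injective on alternating 2-forms: if the 4-form `ω ∧ β`
(written out pointwise as a sum over (2,2)-shuffles) vanishes, then `β = 0`. -/
theorem wedge_with_sContact_form_injective
    {V : Type*} [AddCommGroup V] [Module ℝ V] [FiniteDimensional ℝ V]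
    {n s : ℕ} (hs : 1 ≤ s) (hn : 3 ≤ n)
    (R D : Submodule ℝ V) (hcompl : IsCompl R D)
    (hdimD : Module.finrank ℝ D = 2 * n)
    (hdimV : Module.finrank ℝ V = 2 * n + s)
    (ξ : Fin s → V) (hindep : LinearIndependent ℝ ξ)
    (hspan : Submodule.span ℝ (Set.range ξ) = R)
    (η : Fin s → V →ₗ[ℝ] ℝ)
    (hηξ : ∀ i j, η i (ξ j) = if i = j then (1 : ℝ) else 0)
    (hηD : ∀ i, ∀ v ∈ D, η i v = 0)
    (ω : AlternatingMap ℝ V ℝ (Fin 2))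
    (hω : ∀ (a : Fin s) (v : V), ω ![ξ a, v] = 0)
    (hnondeg : ∀ u ∈ D, u ≠ 0 → ∃ v ∈ D, ω ![u, v] ≠ 0)
    (β : AlternatingMap ℝ V ℝ (Fin 2))
    (hwedge : ∀ x₁ x₂ x₃ x₄ : V,
      ω ![x₁, x₂] * β ![x₃, x₄] - ω ![x₁, x₃] * β ![x₂, x₄]
        + ω ![x₁, x₄] * β ![x₂, x₃] + ω ![x₂, x₃] * β ![x₁, x₄]
        - ω ![x₂, x₄] * β ![x₁, x₃] + ω ![x₃, x₄] * β ![x₁, x₂] = 0) :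
    β = 0 := by
  classical
  have hn6 : (3:ℝ) ≤ (n:ℝ) := by exact_mod_cast hn
  have ωsw := WedgeAux.swap ω
  have βsw := WedgeAux.swap β
  have hω' : ∀ (a : Fin s) (v : V), ω ![v, ξ a] = 0 := fun a v => by
    rw [ωsw, hω, neg_zero]
  -- the restriction of ω to D, as a bilinear form on ↥D
  let Bl : LinearMap.BilinForm ℝ ↥D :=
    LinearMap.mk₂ ℝ (fun x y : ↥D => ω ![(x:V), (y:V)])
      (fun a b c => by
        show ω ![((a + b : ↥D):V), (c:V)] = ω ![(a:V),(c:V)] + ω ![(b:V),(c:V)]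
        rw [Submodule.coe_add]; exact WedgeAux.add_left ω _ _ _)
      (fun c a b => by
        show ω ![((c • a : ↥D):V), (b:V)] = c • ω ![(a:V),(b:V)]
        rw [Submodule.coe_smul, WedgeAux.smul_left, smul_eq_mul])
      (fun a b c => by
        show ω ![(a:V), ((b + c : ↥D):V)] = ω ![(a:V),(b:V)] + ω ![(a:V),(c:V)]
        rw [Submodule.coe_add]; exact WedgeAux.add_right ω _ _ _)
      (fun c a b => by
        show ω ![(a:V), ((c • b : ↥D):V)] = c • ω ![(a:V),(b:V)]
        rw [Submodule.coe_smul, WedgeAux.smul_right, smul_eq_mul])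
  have Bl_apply : ∀ x y : ↥D, Bl x y = ω ![(x:V),(y:V)] := fun x y => rfl
  have hBl : Bl.Nondegenerate := by
    refine (LinearMap.IsRefl.nondegenerate_iff_separatingLeft
      (fun x y h => by rw [Bl_apply] at h ⊢; rw [ωsw, h, neg_zero])).mpr ?_
    intro x hx
    by_contra hx0
    obtain ⟨v, hvD, hv⟩ := hnondeg (x:V) x.2 (by simpa using hx0)
    exact hv (hx ⟨v, hvD⟩)
  let b := Module.finBasis ℝ ↥D
  let c := Bl.dualBasis hBl b
  have hcb : ∀ i j, Bl (c i) (b j) = if j = i then (1:ℝ) else 0 :=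
    fun i j => Bl.apply_dualBasis_left hBl b i j
  have hcrepr : ∀ (u : ↥D) i, c.repr u i = Bl u (b i) :=
    fun u i => Bl.dualBasis_repr_apply hBl b u i
  have hcard : ((Fintype.card (Fin (Module.finrank ℝ ↥D))) : ℝ) = 2*(n:ℝ) := by
    rw [Fintype.card_fin, hdimD]; push_cast; ring
  -- expansion lemmas
  have exp1 : ∀ u : ↥D, ∑ i, Bl (c i) u • b i = u := by
    intro u
    have hco : ∀ i, Bl (c i) u = b.repr u i := by
      intro i
      conv_lhs => rw [← b.sum_repr u]
      rw [map_sum]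
      simp [hcb]
    calc ∑ i, Bl (c i) u • b i = ∑ i, b.repr u i • b i := by simp_rw [hco]
      _ = u := b.sum_repr u
  have exp2 : ∀ u : ↥D, ∑ i, Bl u (b i) • c i = u := by
    intro u
    calc ∑ i, Bl u (b i) • c i = ∑ i, c.repr u i • c i := by simp_rw [hcrepr]
      _ = u := c.sum_repr u
  have exp1V : ∀ u : ↥D, ∑ i, Bl (c i) u • ((b i : V)) = (u:V) := by
    intro u
    have h := congrArg (Subtype.val) (exp1 u)
    simpa using h
  have exp2V : ∀ u : ↥D, ∑ i, Bl u (b i) • ((c i : V)) = (u:V) := by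
    intro u
    have h := congrArg (Subtype.val) (exp2 u)
    simpa using h
  have hbc : ∀ i, ω ![(b i : V), (c i : V)] = -1 := by
    intro i
    have h1 : Bl (c i) (b i) = 1 := by rw [hcb]; simp
    calc ω ![(b i:V), (c i:V)] = - ω ![(c i:V),(b i:V)] := ωsw _ _
      _ = -(Bl (c i) (b i)) := rfl
      _ = -1 := by rw [h1]
  set T : ℝ := ∑ i, β ![(b i:V), (c i:V)] with hT
  -- the main trace identity on D
  have hM : ∀ u v : ↥D,
      ω ![(u:V),(v:V)] * T + (4 - 2*(n:ℝ)) * β ![(u:V),(v:V)] = 0 := by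
    intro u v
    have h0 : ∑ i,
        (ω ![(u:V),(v:V)] * β ![(b i:V),(c i:V)]
          - ω ![(u:V),(b i:V)] * β ![(v:V),(c i:V)]
          + ω ![(u:V),(c i:V)] * β ![(v:V),(b i:V)]
          + ω ![(v:V),(b i:V)] * β ![(u:V),(c i:V)]
          - ω ![(v:V),(c i:V)] * β ![(u:V),(b i:V)]
          + ω ![(b i:V),(c i:V)] * β ![(u:V),(v:V)]) = 0 :=
      Finset.sum_eq_zero fun i _ => hwedge _ _ _ _
    rw [Finset.sum_add_distrib, Finset.sum_sub_distrib, Finset.sum_add_distrib,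
      Finset.sum_add_distrib, Finset.sum_sub_distrib] at h0
    have hS1 : ∑ i, ω ![(u:V),(v:V)] * β ![(b i:V),(c i:V)] = ω ![(u:V),(v:V)] * T := by
      rw [Finset.mul_sum]
    have hS2 : ∑ i, ω ![(u:V),(b i:V)] * β ![(v:V),(c i:V)] = - β ![(u:V),(v:V)] := by
      calc ∑ i, ω ![(u:V),(b i:V)] * β ![(v:V),(c i:V)]
          = ∑ i, Bl u (b i) * β ![(v:V),(c i:V)] := rfl
        _ = β ![(v:V), ∑ i, Bl u (b i) • ((c i:V))] :=
            (WedgeAux.sum_right β _ _ _ _).symm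
        _ = β ![(v:V), (u:V)] := by rw [exp2V]
        _ = - β ![(u:V),(v:V)] := βsw _ _
    have hS3 : ∑ i, ω ![(u:V),(c i:V)] * β ![(v:V),(b i:V)] = β ![(u:V),(v:V)] := by
      calc ∑ i, ω ![(u:V),(c i:V)] * β ![(v:V),(b i:V)]
          = ∑ i, -(Bl (c i) u * β ![(v:V),(b i:V)]) := by
            refine Finset.sum_congr rfl fun i _ => ?_
            rw [show ω ![(u:V),(c i:V)] = -(Bl (c i) u) from ωsw _ _]; ring
        _ = -(∑ i, Bl (c i) u * β ![(v:V),(b i:V)]) := by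
            rw [Finset.sum_neg_distrib]
        _ = -(β ![(v:V), ∑ i, Bl (c i) u • ((b i:V))]) := by
            rw [WedgeAux.sum_right]
        _ = -(β ![(v:V),(u:V)]) := by rw [exp1V]
        _ = β ![(u:V),(v:V)] := by rw [βsw]; ring
    have hS4 : ∑ i, ω ![(v:V),(b i:V)] * β ![(u:V),(c i:V)] = β ![(u:V),(v:V)] := by
      calc ∑ i, ω ![(v:V),(b i:V)] * β ![(u:V),(c i:V)]
          = ∑ i, Bl v (b i) * β ![(u:V),(c i:V)] := rfl
        _ = β ![(u:V), ∑ i, Bl v (b i) • ((c i:V))] :=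
            (WedgeAux.sum_right β _ _ _ _).symm
        _ = β ![(u:V),(v:V)] := by rw [exp2V]
    have hS5 : ∑ i, ω ![(v:V),(c i:V)] * β ![(u:V),(b i:V)] = - β ![(u:V),(v:V)] := by
      calc ∑ i, ω ![(v:V),(c i:V)] * β ![(u:V),(b i:V)]
          = ∑ i, -(Bl (c i) v * β ![(u:V),(b i:V)]) := by
            refine Finset.sum_congr rfl fun i _ => ?_
            rw [show ω ![(v:V),(c i:V)] = -(Bl (c i) v) from ωsw _ _]; ring
        _ = -(∑ i, Bl (c i) v * β ![(u:V),(b i:V)]) := by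
            rw [Finset.sum_neg_distrib]
        _ = -(β ![(u:V), ∑ i, Bl (c i) v • ((b i:V))]) := by
            rw [WedgeAux.sum_right]
        _ = - β ![(u:V),(v:V)] := by rw [exp1V]
    have hS6 : ∑ i, ω ![(b i:V),(c i:V)] * β ![(u:V),(v:V)]
        = -(2*(n:ℝ) * β ![(u:V),(v:V)]) := by
      calc ∑ i, ω ![(b i:V),(c i:V)] * β ![(u:V),(v:V)]
          = ∑ _i : Fin (Module.finrank ℝ ↥D), -(β ![(u:V),(v:V)]) := by
            refine Finset.sum_congr rfl fun i _ => ?_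
            rw [hbc i]; ring
        _ = -(2*(n:ℝ) * β ![(u:V),(v:V)]) := by
            rw [Finset.sum_const, Finset.card_univ, nsmul_eq_mul, hcard]; ring
    rw [hS1, hS2, hS3, hS4, hS5, hS6] at h0
    linarith
  -- T = 0
  have hTz : T = 0 := by
    have h1 : ∀ i, (-1:ℝ)*T + (4-2*(n:ℝ)) * β ![(b i:V),(c i:V)] = 0 := by
      intro i
      have h := hM (b i) (c i)
      rw [hbc i] at h
      linarith
    have h2 : ∑ i, ((-1:ℝ)*T + (4-2*(n:ℝ)) * β ![(b i:V),(c i:V)]) = 0 :=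
      Finset.sum_eq_zero fun i _ => h1 i
    rw [Finset.sum_add_distrib, Finset.sum_const, ← Finset.mul_sum, Finset.card_univ,
      nsmul_eq_mul, hcard] at h2
    have hc4 : (4 - 4*(n:ℝ)) * T = 0 := by linear_combination h2
    have hne : (4:ℝ) - 4*(n:ℝ) < 0 := by nlinarith
    exact (mul_eq_zero.mp hc4).resolve_left (ne_of_lt hne)
  have h4ne : (4 - 2*(n:ℝ)) ≠ 0 := by
    intro h; nlinarith
  -- β vanishes on D × D
  have βD : ∀ x y : V, x ∈ D → y ∈ D → β ![x, y] = 0 := by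
    intro x y hx hy
    have h := hM ⟨x,hx⟩ ⟨y,hy⟩
    rw [hTz, mul_zero, zero_add] at h
    exact (mul_eq_zero.mp h).resolve_left h4ne
  -- β vanishes on ξ × D
  have hβξD : ∀ (a : Fin s) (w : V), w ∈ D → β ![ξ a, w] = 0 := by
    intro a w hw
    have J : ∀ u v w' : ↥D,
        ω ![(u:V),(v:V)] * β ![ξ a,(w':V)] - ω ![(u:V),(w':V)] * β ![ξ a,(v:V)]
          + ω ![(v:V),(w':V)] * β ![ξ a,(u:V)] = 0 := by
      intro u v w'
      have h := hwedge (ξ a) u v w'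
      simp only [hω] at h
      linarith
    set wD : ↥D := ⟨w, hw⟩ with hwD
    have hwc : (wD : V) = w := rfl
    have h2 : ∑ i,
        (ω ![(b i:V),(c i:V)] * β ![ξ a, w]
          - ω ![(b i:V), w] * β ![ξ a, (c i:V)]
          + ω ![(c i:V), w] * β ![ξ a, (b i:V)]) = 0 :=
      Finset.sum_eq_zero fun i _ => J (b i) (c i) wD
    rw [Finset.sum_add_distrib, Finset.sum_sub_distrib] at h2
    have hA : ∑ i, ω ![(b i:V),(c i:V)] * β ![ξ a, w] = -(2*(n:ℝ) * β ![ξ a, w]) := by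
      calc ∑ i, ω ![(b i:V),(c i:V)] * β ![ξ a, w]
          = ∑ _i : Fin (Module.finrank ℝ ↥D), -(β ![ξ a, w]) := by
            refine Finset.sum_congr rfl fun i _ => ?_
            rw [hbc i]; ring
        _ = -(2*(n:ℝ) * β ![ξ a, w]) := by
            rw [Finset.sum_const, Finset.card_univ, nsmul_eq_mul, hcard]; ring
    have hB : ∑ i, ω ![(b i:V), w] * β ![ξ a, (c i:V)] = - β ![ξ a, w] := by
      calc ∑ i, ω ![(b i:V), w] * β ![ξ a, (c i:V)]
          = ∑ i, -(Bl wD (b i) * β ![ξ a, (c i:V)]) := by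
            refine Finset.sum_congr rfl fun i _ => ?_
            rw [show ω ![(b i:V), w] = -(Bl wD (b i)) from ωsw _ _]; ring
        _ = -(∑ i, Bl wD (b i) * β ![ξ a, (c i:V)]) := by rw [Finset.sum_neg_distrib]
        _ = -(β ![ξ a, ∑ i, Bl wD (b i) • ((c i:V))]) := by rw [WedgeAux.sum_right]
        _ = - β ![ξ a, w] := by rw [exp2V, hwc]
    have hC : ∑ i, ω ![(c i:V), w] * β ![ξ a, (b i:V)] = β ![ξ a, w] := by
      calc ∑ i, ω ![(c i:V), w] * β ![ξ a, (b i:V)]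
          = ∑ i, Bl (c i) wD * β ![ξ a, (b i:V)] := rfl
        _ = β ![ξ a, ∑ i, Bl (c i) wD • ((b i:V))] := (WedgeAux.sum_right β _ _ _ _).symm
        _ = β ![ξ a, w] := by rw [exp1V, hwc]
    rw [hA, hB, hC] at h2
    have hc2 : (2 - 2*(n:ℝ)) * β ![ξ a, w] = 0 := by linear_combination h2
    have hne : (2:ℝ) - 2*(n:ℝ) < 0 := by nlinarith
    exact (mul_eq_zero.mp hc2).resolve_left (ne_of_lt hne)
  -- β vanishes on ξ × ξ
  have hξξ : ∀ a a' : Fin s, β ![ξ a, ξ a'] = 0 := by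
    have hpos : 0 < Module.finrank ℝ ↥D := by rw [hdimD]; omega
    set i0 : Fin (Module.finrank ℝ ↥D) := ⟨0, hpos⟩ with hi0
    have hb0 : ((b i0 : V)) ≠ 0 := by
      simpa using b.ne_zero i0
    obtain ⟨v0, hv0D, hv0⟩ := hnondeg (b i0) (b i0).2 hb0
    intro a a'
    have h := hwedge (ξ a) (b i0) (ξ a') v0
    simp only [hω, hω'] at h
    have h3 : ω ![(b i0:V), v0] * β ![ξ a, ξ a'] = 0 := by linarith
    exact (mul_eq_zero.mp h3).resolve_left hv0
  -- β vanishes with ξ in the first slot and anything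
  have mem_top : ∀ x : V, x ∈ R ⊔ D := by
    intro x; rw [hcompl.sup_eq_top]; trivial
  have hβξ : ∀ (a : Fin s) (y : V), β ![ξ a, y] = 0 := by
    intro a y
    obtain ⟨r, hr, d, hd, hy⟩ := Submodule.mem_sup.mp (mem_top y)
    rw [← hy, WedgeAux.add_right]
    have hr0 : β ![ξ a, r] = 0 := by
      rw [← hspan] at hr
      obtain ⟨cf, hcf⟩ := (Submodule.mem_span_range_iff_exists_fun ℝ).mp hr
      rw [← hcf, WedgeAux.sum_right]
      exact Finset.sum_eq_zero fun j _ => by rw [hξξ a j, mul_zero]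
    rw [hr0, hβξD a d hd, add_zero]
  have hβR : ∀ (r y : V), r ∈ R → β ![r, y] = 0 := by
    intro r y hr
    rw [← hspan] at hr
    obtain ⟨cf, hcf⟩ := (Submodule.mem_span_range_iff_exists_fun ℝ).mp hr
    rw [← hcf, WedgeAux.sum_left]
    exact Finset.sum_eq_zero fun j _ => by rw [hβξ j y, mul_zero]
  have key : ∀ x y : V, β ![x, y] = 0 := by
    intro x y
    obtain ⟨r, hr, d, hd, hx⟩ := Submodule.mem_sup.mp (mem_top x)
    rw [← hx, WedgeAux.add_left, hβR r y hr, zero_add]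
    obtain ⟨r', hr', d', hd', hy⟩ := Submodule.mem_sup.mp (mem_top y)
    rw [← hy, WedgeAux.add_right]
    have hdr : β ![d, r'] = 0 := by
      rw [show β ![d, r'] = - β ![r', d] from βsw _ _, hβR r' d hr', neg_zero]
    rw [hdr, βD d d' hd hd', add_zero]
  ext v
  have hv : v = ![v 0, v 1] := by
    funext i; fin_cases i <;> rfl
  show β v = 0
  conv_lhs => rw [hv]
  exact key (v 0) (v 1)
end

section
/- Let f_B be a skew-adjoint endomorphism of V_B, ξ ∈ V_B a unit vector with f_B ξ = 0 and f_B²x = −x + ⟨x, ξ⟩ξ for all x ∈ V_B, and let J_N be a skew-adjoint endomorphism of V_N with J_N² = −λ²·id. Define on V = V_B ⊕ V_N: f(x_B + x_N) := λ f_B x_B + J_N x_N, η(x_B + x_N) := ⟨x_B, ξ⟩, and Q := λ²·id + (1 − λ²)·η⊗ξ. Then Q is self-adjoint with Qξ = ξ, and for all x, y ∈ V: f²x = −Qx + η(x)ξ; ⟨fx, fy⟩ = ⟨x, Qy⟩ − η(x)η(y); η(fx) = 0; η(x) = ⟨x, ξ⟩; and fξ = 0. In other words, (f, Q, ξ, η)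 is a pointwise weak almost contact metric structure on V. -/
open scoped RealInnerProductSpace

/-- the product construction. On the orthogonal direct sum
`V = V_B ⊕ V_N` (realized as `WithLp 2 (V_B × V_N)`), given a nearly-cosymplectic-type
pair `(f_B, ξ)` on `V_B` and a skew-adjoint `J_N` on `V_N` with `J_N² = −λ²·id`, the
data `f(x_B + x_N) = λ f_B x_B + J_N x_N`, `η(x) = ⟪x_B, ξ⟫`,
`Q = λ²·id + (1 − λ²)·η⊗ξ` form a pointwise weak almost contact metric structure. -/
theorem product_weak_almost_contact_metric
    {VB VN : Type*}
    [NormedAddCommGroup VB] [InnerProductSpace ℝ VB] [FiniteDimensional ℝ VB]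
    [NormedAddCommGroup VN] [InnerProductSpace ℝ VN] [FiniteDimensional ℝ VN]
    (l : ℝ) (hl : 0 < l)
    (fB : VB →ₗ[ℝ] VB)
    (hfBskew : ∀ x y : VB, ⟪fB x, y⟫ = -⟪x, fB y⟫)
    (ξB : VB) (hξBunit : ‖ξB‖ = 1) (hfBξ : fB ξB = 0)
    (hfB2 : ∀ x : VB, fB (fB x) = -x + ⟪x, ξB⟫ • ξB)
    (JN : VN →ₗ[ℝ] VN)
    (hJskew : ∀ x y : VN, ⟪JN x, y⟫ = -⟪x, JN y⟫)
    (hJ2 : ∀ x : VN, JN (JN x) = -(l ^ 2) • x)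
    (f : WithLp 2 (VB × VN) → WithLp 2 (VB × VN))
    (hf : ∀ x, f x = (WithLp.equiv 2 (VB × VN)).symm
      (l • fB ((WithLp.equiv 2 (VB × VN)) x).1, JN ((WithLp.equiv 2 (VB × VN)) x).2))
    (η : WithLp 2 (VB × VN) → ℝ)
    (hη : ∀ x, η x = ⟪((WithLp.equiv 2 (VB × VN)) x).1, ξB⟫)
    (ξ : WithLp 2 (VB × VN)) (hξ : ξ = (WithLp.equiv 2 (VB × VN)).symm (ξB, 0))
    (Q : WithLp 2 (VB × VN) → WithLp 2 (VB × VN))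
    (hQ : ∀ x, Q x = l ^ 2 • x + (1 - l ^ 2) • η x • ξ) :
    (∀ x y, ⟪Q x, y⟫ = ⟪x, Q y⟫) ∧
    Q ξ = ξ ∧
    (∀ x, f (f x) = -Q x + η x • ξ) ∧
    (∀ x y, ⟪f x, f y⟫ = ⟪x, Q y⟫ - η x * η y) ∧
    (∀ x, η (f x) = 0) ∧
    (∀ x, η x = ⟪x, ξ⟫) ∧
    f ξ = 0 := by
  have hξfst : ξ.fst = ξB := by rw [hξ]; rfl
  have hξsnd : ξ.snd = (0 : VN) := by rw [hξ]; rfl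
  -- η x = ⟪x, ξ⟫
  have hηinner : ∀ x : WithLp 2 (VB × VN), η x = ⟪x, ξ⟫ := by
    intro x
    rw [WithLp.prod_inner_apply, WithLp.ofLp_fst, WithLp.ofLp_fst, WithLp.ofLp_snd, WithLp.ofLp_snd, hξfst, hξsnd, inner_zero_right, add_zero, hη x]
    rfl
  have hηξ : η ξ = 1 := by
    rw [hηinner, WithLp.prod_inner_apply, WithLp.ofLp_fst, WithLp.ofLp_snd, hξfst, hξsnd, inner_zero_right, add_zero,
      real_inner_self_eq_norm_sq, hξBunit]
    norm_num
  -- Q self-adjoint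
  have hQsa : ∀ x y, ⟪Q x, y⟫ = ⟪x, Q y⟫ := by
    intro x y
    rw [hQ x, hQ y, inner_add_left, inner_add_right, real_inner_smul_left,
      real_inner_smul_right, real_inner_smul_left, real_inner_smul_right,
      real_inner_smul_left, real_inner_smul_right, hηinner x, hηinner y,
      real_inner_comm y ξ]
    ring
  -- Q ξ = ξ
  have hQξ : Q ξ = ξ := by
    rw [hQ, hηξ, one_smul]
    module
  -- fst/snd of f x
  have hffst : ∀ x : WithLp 2 (VB × VN), (f x).fst = l • fB x.fst := by
    intro x; rw [hf]; rfl
  have hfsnd : ∀ x : WithLp 2 (VB × VN), (f x).snd = JN x.snd := by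
    intro x; rw [hf]; rfl
  have hηf : ∀ x, η (f x) = 0 := by
    intro x
    rw [hη]
    show ⟪(f x).fst, ξB⟫ = 0
    rw [hffst, real_inner_smul_left, hfBskew, hfBξ, inner_zero_right]
    ring
  have hQfst : ∀ x : WithLp 2 (VB × VN), (Q x).fst = l ^ 2 • x.fst + (1 - l ^ 2) • η x • ξB := by
    intro x
    rw [hQ]
    show (l ^ 2 • x).fst + ((1 - l ^ 2) • η x • ξ).fst = _
    rw [WithLp.smul_fst, WithLp.smul_fst, WithLp.smul_fst, hξfst]
  have hQsnd : ∀ x : WithLp 2 (VB × VN), (Q x).snd = l ^ 2 • x.snd := by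
    intro x
    rw [hQ]
    show (l ^ 2 • x).snd + ((1 - l ^ 2) • η x • ξ).snd = _
    rw [WithLp.smul_snd, WithLp.smul_snd, WithLp.smul_snd, hξsnd, smul_zero, smul_zero, add_zero]
  refine ⟨hQsa, hQξ, ?_, ?_, hηf, hηinner, ?_⟩
  · -- f (f x) = -Q x + η x • ξ
    intro x
    have h1 : (f (f x)).fst = (-Q x + η x • ξ).fst := by
      rw [hffst, hffst, WithLp.add_fst, WithLp.neg_fst, WithLp.smul_fst, hQfst, hξfst]
      rw [map_smul, hfB2, hη x]
      show l • l • (-x.fst + ⟪x.fst, ξB⟫ • ξB) =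
        -(l ^ 2 • x.fst + (1 - l ^ 2) • ⟪x.fst, ξB⟫ • ξB) + ⟪x.fst, ξB⟫ • ξB
      match_scalars <;> ring
    have h2 : (f (f x)).snd = (-Q x + η x • ξ).snd := by
      rw [hfsnd, hfsnd, WithLp.add_snd, WithLp.neg_snd, WithLp.smul_snd, hQsnd, hξsnd,
        hJ2, smul_zero, add_zero, neg_smul]
    exact WithLp.ofLp_injective 2 (Prod.ext h1 h2)
  · -- metric compatibility
    intro x y
    rw [WithLp.prod_inner_apply, WithLp.prod_inner_apply, WithLp.ofLp_fst, WithLp.ofLp_fst, WithLp.ofLp_fst, WithLp.ofLp_fst, WithLp.ofLp_snd, WithLp.ofLp_snd, WithLp.ofLp_snd, WithLp.ofLp_snd, hffst, hffst, hfsnd, hfsnd,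
      hQfst, hQsnd]
    have hB : ⟪fB x.fst, fB y.fst⟫ = ⟪x.fst, y.fst⟫ - ⟪x.fst, ξB⟫ * ⟪y.fst, ξB⟫ := by
      rw [hfBskew, hfB2, inner_add_right, inner_neg_right, real_inner_smul_right]
      ring
    have hN : ⟪JN x.snd, JN y.snd⟫ = l ^ 2 * ⟪x.snd, y.snd⟫ := by
      rw [hJskew, hJ2, real_inner_smul_right]
      ring
    simp only [real_inner_smul_left, real_inner_smul_right, inner_add_right, hB, hN,
      hη x, hη y, WithLp.equiv_apply, WithLp.ofLp_fst]
    ring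
  · -- f ξ = 0
    have h1 : (f ξ).fst = (0 : WithLp 2 (VB × VN)).fst := by
      rw [hffst, hξfst, hfBξ, smul_zero, WithLp.zero_fst]
    have h2 : (f ξ).snd = (0 : WithLp 2 (VB × VN)).snd := by
      rw [hfsnd, hξsnd, map_zero, WithLp.zero_snd]
    exact WithLp.ofLp_injective 2 (Prod.ext h1 h2)
end
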